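/- arXiv:1003.0613 — 2 statements merged into one kernel-verified Lean document; each statement's English description precedes it below -/
import Mathlib

section
/- Let (β, ω) be a twisted action of an inverse semigroup S on a C*-algebra B. Extend each β_s strictly to multiplier algebras. Then β_s(ω(s*,s)) = ω(s,s*) for all s ∈ S. -/
noncomputable section

/-- An inverse semigroup: a semigroup with an involution `star` such that
`s·s*·s = s`, `s*·s·s* = s*`, the involution is an anti-multiplicative involution,
and idempotents commute (equivalently: generalized inverses are unique). -/
class InverseSemigroup (S : Type*) extends Semigroup S, Star S where
  mul_star_mul : ∀ s : S, s * star s * s = s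
  star_mul_star : ∀ s : S, star s * s * star s = star s
  star_star : ∀ s : S, star (star s) = s
  star_mul : ∀ s t : S, star (s * t) = star t * star s
  idem_comm : ∀ e f : S, e * e = e → f * f = f → e * f = f * e

variable {H : Type*} [NormedAddCommGroup H] [InnerProductSpace ℂ H] [CompleteSpace H]

/-- `D` is a closed two-sided ideal of the C*-algebra `Bs ⊆ B(H)`. -/
def IsClosedIdealOf (Bs D : Set (H →L[ℂ] H)) : Prop :=
  D ⊆ Bs ∧ IsClosed D ∧ (0 : H →L[ℂ] H) ∈ D ∧
  (∀ x ∈ D, ∀ y ∈ D, x + y ∈ D) ∧ (∀ (c : ℂ), ∀ x ∈ D, c • x ∈ D) ∧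
  (∀ b ∈ Bs, ∀ x ∈ D, b * x ∈ D ∧ x * b ∈ D)

/-- `u ∈ B(H)` is a unitary multiplier of the ideal `D`: it multiplies `D` into itself
on both sides and `u* u` and `u u*` act as the identity on `D` on both sides. -/
def IsUnitMult (u : H →L[ℂ] H) (D : Set (H →L[ℂ] H)) : Prop :=
  (∀ x ∈ D, u * x ∈ D ∧ x * u ∈ D) ∧
  (∀ x ∈ D, star u * (u * x) = x ∧ u * (star u * x) = x ∧
    (x * u) * star u = x ∧ (x * star u) * u = x)

/-- A twisted action `(β, ω)` of an inverse semigroup `S` on the C*-algebra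
`Bs ⊆ B(H)`: ideals `D s` of `Bs` with dense linear span, ∗-isomorphisms
`β s : D s* → D s`, and unitary multipliers `ω s t` of `D (s t)` satisfying
(i) `β r ∘ β s = Ad_{ω(r,s)} ∘ β (r s)` (including equality of domains);
(ii) the cocycle identity `β r (x ω(s,t)) ω(r,st) = β r (x) ω(r,s) ω(rs,t)`
for `x ∈ D r* ∩ D (st)`;
(iii) `ω(e,f) = 1_{ef}` for idempotents `e, f`, and `ω(r, r*r) = ω(rr*, r) = 1_r`;
(iv) `ω(s*,e) ω(s*e,s) x = ω(s*,s) x` for idempotent `e` and `x ∈ D (s* e s)`. -/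
structure TwistedAction (S : Type*) [InverseSemigroup S]
    (H : Type*) [NormedAddCommGroup H] [InnerProductSpace ℂ H] [CompleteSpace H]
    (Bs : StarSubalgebra ℂ (H →L[ℂ] H)) where
  hBclosed : IsClosed (Bs : Set (H →L[ℂ] H))
  D : S → Set (H →L[ℂ] H)
  hD : ∀ s : S, IsClosedIdealOf (Bs : Set (H →L[ℂ] H)) (D s)
  dense_span : closure (Submodule.span ℂ (⋃ s : S, D s) : Set (H →L[ℂ] H))
      = (Bs : Set (H →L[ℂ] H))
  β : S → (H →L[ℂ] H) → (H →L[ℂ] H)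
  hβ_bij : ∀ s : S, Set.BijOn (β s) (D (star s)) (D s)
  hβ_add : ∀ s : S, ∀ x ∈ D (star s), ∀ y ∈ D (star s), β s (x + y) = β s x + β s y
  hβ_smul : ∀ s : S, ∀ (c : ℂ), ∀ x ∈ D (star s), β s (c • x) = c • β s x
  hβ_mul : ∀ s : S, ∀ x ∈ D (star s), ∀ y ∈ D (star s), β s (x * y) = β s x * β s y
  hβ_star : ∀ s : S, ∀ x ∈ D (star s), β s (star x) = star (β s x)
  ω : S → S → (H →L[ℂ] H)
  hω : ∀ s t : S, IsUnitMult (ω s t) (D (s * t))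
  ax1_dom : ∀ r s : S, {x | x ∈ D (star s) ∧ β s x ∈ D (star r)} = D (star (r * s))
  ax1 : ∀ r s : S, ∀ x ∈ D (star (r * s)),
      β r (β s x) = ω r s * β (r * s) x * star (ω r s)
  ax2 : ∀ r s t : S, ∀ x ∈ D (star r) ∩ D (s * t),
      β r (x * ω s t) * ω r (s * t) = β r x * ω r s * ω (r * s) t
  ax3_idem : ∀ e f : S, e * e = e → f * f = f →
      ∀ x ∈ D (e * f), ω e f * x = x ∧ x * ω e f = x
  ax3 : ∀ r : S, ∀ x ∈ D r,
      ω r (star r * r) * x = x ∧ x * ω r (star r * r) = x ∧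
      ω (r * star r) r * x = x ∧ x * ω (r * star r) r = x
  ax4 : ∀ s e : S, e * e = e → ∀ x ∈ D (star s * e * s),
      ω (star s) e * (ω (star s * e) s * x) = ω (star s) s * x

section Aux

lemma IS.star_idem {S : Type*} [InverseSemigroup S] (s : S) :
    star (star s * s) = star s * s := by
  rw [InverseSemigroup.star_mul, InverseSemigroup.star_star]

lemma IS.star_idem' {S : Type*} [InverseSemigroup S] (s : S) :
    star (s * star s) = s * star s := by
  rw [InverseSemigroup.star_mul, InverseSemigroup.star_star]

lemma IS.mul_idem {S : Type*} [InverseSemigroup S] (s : S) :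
    s * (star s * s) = s := by
  rw [← mul_assoc]; exact InverseSemigroup.mul_star_mul s

namespace TwistedAction

variable {S : Type*} [InverseSemigroup S]
    {H : Type*} [NormedAddCommGroup H] [InnerProductSpace ℂ H] [CompleteSpace H]
    {Bs : StarSubalgebra ℂ (H →L[ℂ] H)} (T : TwistedAction S H Bs)

lemma aux_D (s : S) : T.D (star s) = T.D (star s * s) := by
  have key := T.ax1_dom (star s) s
  rw [IS.star_idem] at key
  rw [← key]
  ext x
  simp only [Set.mem_setOf_eq, InverseSemigroup.star_star]
  exact ⟨fun h => ⟨h, (T.hβ_bij s).mapsTo h⟩, fun h => h.1⟩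

lemma aux_D' (s : S) : T.D s = T.D (s * star s) := by
  have h := T.aux_D (star s)
  rwa [InverseSemigroup.star_star] at h

lemma aux_idem (s : S) : ∀ x ∈ T.D (star s * s), T.β (star s * s) x = x := by
  intro x hx
  have hx' : x ∈ T.D (star s) := by rw [T.aux_D]; exact hx
  have hxA : x ∈ T.D (star (s * (star s * s))) := by rw [IS.mul_idem]; exact hx'
  have key := T.ax1 s (star s * s) x hxA
  rw [IS.mul_idem] at key
  have hbx : T.β s x ∈ T.D s := (T.hβ_bij s).mapsTo hx'
  have hu := T.hω s (star s * s)
  rw [IS.mul_idem] at hu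
  have c1 := (T.ax3 s (T.β s x) hbx).1
  have c2 := (T.ax3 s (T.β s x) hbx).2.1
  have heq : T.β s (T.β (star s * s) x) = T.β s x := by
    rw [key, c1]
    conv_lhs => rw [← c2]
    exact (hu.2 _ hbx).2.2.1
  have hm1 : T.β (star s * s) x ∈ T.D (star s) := by
    rw [T.aux_D]
    refine (T.hβ_bij (star s * s)).mapsTo ?_
    rw [IS.star_idem]; exact hx
  exact (T.hβ_bij s).injOn hm1 hx' heq

lemma aux_idem' (s : S) : ∀ x ∈ T.D (s * star s), T.β (s * star s) x = x := by
  intro x hx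
  have h := T.aux_idem (star s) x (by rw [InverseSemigroup.star_star]; exact hx)
  rwa [InverseSemigroup.star_star] at h

lemma aux_right (s : S) : ∀ x ∈ T.D (star s),
    T.β s (x * T.ω (star s) s) = T.β s x * T.ω s (star s) := by
  intro x hx
  have hx2 : x ∈ T.D (star s * s) := by rw [← T.aux_D]; exact hx
  have key := T.ax2 s (star s) s x ⟨hx, hx2⟩
  have hu1 := T.hω (star s) s
  have hxω : x * T.ω (star s) s ∈ T.D (star s * s) := (hu1.1 x hx2).2
  have hxω' : x * T.ω (star s) s ∈ T.D (star s) := by rw [T.aux_D]; exact hxω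
  have hb : T.β s (x * T.ω (star s) s) ∈ T.D s := (T.hβ_bij s).mapsTo hxω'
  have l := (T.ax3 s _ hb).2.1
  have hbx : T.β s x ∈ T.D s := (T.hβ_bij s).mapsTo hx
  have hbx3 : T.β s x ∈ T.D (s * star s) := by rw [← T.aux_D']; exact hbx
  have hu2 := T.hω s (star s)
  have h6 : T.β s x * T.ω s (star s) ∈ T.D (s * star s) := (hu2.1 _ hbx3).2
  have h6' : T.β s x * T.ω s (star s) ∈ T.D s := by rw [T.aux_D']; exact h6
  have r := (T.ax3 s _ h6').2.2.2
  rw [l, r] at key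
  exact key

end TwistedAction

end Aux

/-- For a twisted action of an inverse semigroup `S`, the strict extension of `β s` to
multiplier algebras satisfies `β s (ω(s*,s)) = ω(s,s*)`; at the level of elements this
says `β s (ω(s*,s)·x) = ω(s,s*)·β s (x)` and `β s (x·ω(s*,s)) = β s (x)·ω(s,s*)`
for all `x ∈ D s*`. -/
theorem stmt18 {S : Type*} [InverseSemigroup S]
    {H : Type*} [NormedAddCommGroup H] [InnerProductSpace ℂ H] [CompleteSpace H]
    {Bs : StarSubalgebra ℂ (H →L[ℂ] H)} (T : TwistedAction S H Bs) :
    ∀ s : S, ∀ x ∈ T.D (star s),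
      T.β s (T.ω (star s) s * x) = T.ω s (star s) * T.β s x ∧
      T.β s (x * T.ω (star s) s) = T.β s x * T.ω s (star s) := by
  intro s x hx
  refine ⟨?_, T.aux_right s x hx⟩
  have hx2 : x ∈ T.D (star s * s) := by rw [← T.aux_D]; exact hx
  have hbx : T.β s x ∈ T.D s := (T.hβ_bij s).mapsTo hx
  -- Step A: β(s*)(β s x) = ω(s*,s) * x * ω(s*,s)*
  have hxA : x ∈ T.D (star (star s * s)) := by rw [IS.star_idem]; exact hx2
  have keyA := T.ax1 (star s) s x hxA
  rw [T.aux_idem s x hx2] at keyA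
  have hu1 := T.hω (star s) s
  have hωx : T.ω (star s) s * x ∈ T.D (star s * s) := (hu1.1 x hx2).1
  have star_eq : T.β (star s) (T.β s x) * T.ω (star s) s = T.ω (star s) s * x := by
    rw [keyA]
    exact (hu1.2 _ hωx).2.2.2
  -- Step C: rewrite the argument and use the right-hand identity
  have hu_mem : T.β (star s) (T.β s x) ∈ T.D (star s) := by
    refine (T.hβ_bij (star s)).mapsTo ?_
    rw [InverseSemigroup.star_star]; exact hbx
  rw [← star_eq, T.aux_right s _ hu_mem]
  -- Step D
  have hbx3 : T.β s x ∈ T.D (s * star s) := by rw [← T.aux_D']; exact hbx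
  have hbxD : T.β s x ∈ T.D (star (s * star s)) := by rw [IS.star_idem']; exact hbx3
  have keyD := T.ax1 s (star s) (T.β s x) hbxD
  rw [T.aux_idem' s _ hbx3] at keyD
  rw [keyD]
  have hu2 := T.hω s (star s)
  have hz : T.ω s (star s) * T.β s x ∈ T.D (s * star s) := (hu2.1 _ hbx3).1
  exact (hu2.2 _ hz).2.2.2
end
end

section
/- Let (β, ω) be a twisted action of an inverse semigroup S on B, and suppose r ≤ s ≤ t in S. Then ω(t, r*r) x = ω(t, s*s) ω(s, r*r) x for all x ∈ D_r. -/
noncomputable section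

variable {H : Type*} [NormedAddCommGroup H] [InnerProductSpace ℂ H] [CompleteSpace H]

namespace TwistedAction

variable {S : Type*} [InverseSemigroup S]
    {H : Type*} [NormedAddCommGroup H] [InnerProductSpace ℂ H] [CompleteSpace H]
    {Bs : StarSubalgebra ℂ (H →L[ℂ] H)} (T : TwistedAction S H Bs)

lemma D_eq_self_mul_star (u : S) : T.D u = T.D (u * star u) := by
  have h := T.ax1_dom u (star u)
  have h1 : star (u * star u) = u * star u := by
    rw [InverseSemigroup.star_mul, InverseSemigroup.star_star]
  ext x
  constructor
  · intro hx
    have hx' : x ∈ T.D (star (star u)) := by rw [InverseSemigroup.star_star]; exact hx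
    have hmem : x ∈ {x | x ∈ T.D (star (star u)) ∧ T.β (star u) x ∈ T.D (star u)} :=
      ⟨hx', (T.hβ_bij (star u)).mapsTo hx'⟩
    rw [h, h1] at hmem
    exact hmem
  · intro hx
    have hmem : x ∈ {x | x ∈ T.D (star (star u)) ∧ T.β (star u) x ∈ T.D (star u)} := by
      rw [h, h1]; exact hx
    have := hmem.1
    rwa [InverseSemigroup.star_star] at this

lemma beta_idem {e : S} (he : e * e = e) (_hse : star e = e) :
    ∀ x ∈ T.D e, T.β e x = x := by
  intro z hz
  obtain ⟨y, hy, hyz⟩ := (T.hβ_bij e).surjOn hz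
  have hdom : y ∈ T.D (star (e * e)) := by rwa [he]
  have h1 := T.ax1 e e y hdom
  rw [he, hyz] at h1
  have hz' : z ∈ T.D (e * e) := by rwa [he]
  have h2 := T.ax3_idem e e he he z hz'
  have h3 : z * star (T.ω e e) = z := by
    have h4 := ((T.hω e e).2 z hz').2.2.1
    rwa [h2.2] at h4
  rwa [h2.1, h3] at h1

end TwistedAction

/-- For a twisted action of an inverse semigroup `S` and `r ≤ s ≤ t` in `S`
(`r = s r* r` and `s = t s* s`), one has `ω(t, r*r) x = ω(t, s*s) ω(s, r*r) x`
for all `x ∈ D r`. -/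
theorem stmt19 {S : Type*} [InverseSemigroup S]
    {H : Type*} [NormedAddCommGroup H] [InnerProductSpace ℂ H] [CompleteSpace H]
    {Bs : StarSubalgebra ℂ (H →L[ℂ] H)} (T : TwistedAction S H Bs)
    (r s t : S) (hrs : r = s * (star r * r)) (hst : s = t * (star s * s)) :
    ∀ x ∈ T.D r,
      T.ω t (star r * r) * x = T.ω t (star s * s) * (T.ω s (star r * r) * x) := by
  classical
  have sm := @InverseSemigroup.star_mul S _
  have ss := @InverseSemigroup.star_star S _
  have msm := @InverseSemigroup.mul_star_mul S _
  have ic := @InverseSemigroup.idem_comm S _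
  have msm' : ∀ a : S, a * (star a * a) = a := fun a => by
    rw [← mul_assoc a (star a) a, msm a]
  set e : S := star r * r with hedef
  set f : S := star s * s with hfdef
  set k : S := star t * t with hkdef
  have hstare : star e = e := by rw [hedef, sm, ss]
  have hstarf : star f = f := by rw [hfdef, sm, ss]
  have hstark : star k = k := by rw [hkdef, sm, ss]
  have he : e * e = e := by
    show star r * r * (star r * r) = star r * r
    rw [mul_assoc (star r) r (star r * r), msm' r]
  have hf : f * f = f := by
    show star s * s * (star s * s) = star s * s
    rw [mul_assoc (star s) s (star s * s), msm' s]
  have hk : k * k = k := by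
    show star t * t * (star t * t) = star t * t
    rw [mul_assoc (star t) t (star t * t), msm' t]
  have hse' : s * e = r := hrs.symm
  have htf : t * f = s := hst.symm
  -- e = e * f
  have hef : e * f = e := by
    have h1 : e * f * e = e := by
      conv_rhs => rw [hedef, hrs, sm, hstare]
      simp only [hedef, hfdef, mul_assoc]
    have h2 : e * f * e = e * f := by
      rw [mul_assoc e f e, ic f e hf he, ← mul_assoc e e f, he]
    rw [← h2, h1]
  have hfe : f * e = e := by rw [← ic e f he hf, hef]
  have hte : t * e = r := by
    calc t * e = t * (f * e) := by rw [hfe]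
      _ = t * f * e := (mul_assoc t f e).symm
      _ = s * e := by rw [htf]
      _ = r := hse'
  -- e = e * k
  have hek : e * k = e := by
    have h1 : e * k * e = e := by
      conv_rhs => rw [hedef, ← hte, sm, hstare]
      simp only [hedef, hkdef, mul_assoc]
    have h2 : e * k * e = e * k := by
      rw [mul_assoc e k e, ic k e hk he, ← mul_assoc e e k, he]
    rw [← h2, h1]
  -- membership facts
  have hDr' : T.D (star r) = T.D e := by
    have := T.D_eq_self_mul_star (star r)
    rwa [ss] at this
  have hDs' : T.D (star s) = T.D f := by
    have := T.D_eq_self_mul_star (star s)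
    rwa [ss] at this
  have hDt' : T.D (star t) = T.D k := by
    have := T.D_eq_self_mul_star (star t)
    rwa [ss] at this
  intro x hx
  obtain ⟨x', hx'mem, hx'⟩ := (T.hβ_bij r).surjOn hx
  have hx'e : x' ∈ T.D e := hDr' ▸ hx'mem
  have hbe : T.β e x' = x' := T.beta_idem he hstare x' hx'e
  -- x' ∈ D f
  have hx'f : x' ∈ T.D f := by
    have hdom := T.ax1_dom f e
    have h5 : star (f * e) = e := by rw [sm, hstare, hstarf, hef]
    have hx'in : x' ∈ {y | y ∈ T.D (star e) ∧ T.β e y ∈ T.D (star f)} := by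
      rw [hdom, h5]; exact hx'e
    have h6 := hx'in.2
    rwa [hbe, hstarf] at h6
  -- x' ∈ D k
  have hx'k : x' ∈ T.D k := by
    have hdom := T.ax1_dom k e
    have h5 : star (k * e) = e := by rw [sm, hstare, hstark, hek]
    have hx'in : x' ∈ {y | y ∈ T.D (star e) ∧ T.β e y ∈ T.D (star k)} := by
      rw [hdom, h5]; exact hx'e
    have h6 := hx'in.2
    rwa [hbe, hstark] at h6
  have hx'ss : x' ∈ T.D (star s) := hDs'.symm ▸ hx'f
  have hx'st : x' ∈ T.D (star t) := hDt'.symm ▸ hx'k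
  -- Eq1 : β t x' * ω t e = ω t e * x
  have hdom1 : x' ∈ T.D (star (t * e)) := by rw [hte]; exact hx'mem
  have e1 := T.ax1 t e x' hdom1
  rw [hte, hbe, hx'] at e1
  have hxte : x ∈ T.D (t * e) := by rwa [hte]
  have Eq1 : T.β t x' * T.ω t e = T.ω t e * x := by
    rw [e1]
    exact ((T.hω t e).2 (T.ω t e * x) ((T.hω t e).1 x hxte).1).2.2.2
  -- Eq2 : β s x' * ω s e = ω s e * x
  have hdom2 : x' ∈ T.D (star (s * e)) := by rw [hse']; exact hx'mem
  have e2 := T.ax1 s e x' hdom2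
  rw [hse', hbe, hx'] at e2
  have hxse : x ∈ T.D (s * e) := by rwa [hse']
  have Eq2 : T.β s x' * T.ω s e = T.ω s e * x := by
    rw [e2]
    exact ((T.hω s e).2 (T.ω s e * x) ((T.hω s e).1 x hxse).1).2.2.2
  -- Eq3 : β t x' * ω t f = ω t f * β s x'
  have hdom3 : x' ∈ T.D (star (t * f)) := by rw [htf]; exact hx'ss
  have e3 := T.ax1 t f x' hdom3
  have hbf : T.β f x' = x' := T.beta_idem hf hstarf x' hx'f
  rw [htf, hbf] at e3
  have hβs : T.β s x' ∈ T.D s := (T.hβ_bij s).mapsTo hx'ss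
  have hβs' : T.β s x' ∈ T.D (t * f) := by rwa [htf]
  have Eq3 : T.β t x' * T.ω t f = T.ω t f * T.β s x' := by
    rw [e3]
    exact ((T.hω t f).2 (T.ω t f * T.β s x') ((T.hω t f).1 _ hβs').1).2.2.2
  -- Eq4 : β t x' * ω t e = β t x' * ω t f * ω s e
  have hx'fe : x' ∈ T.D (f * e) := by rwa [hfe]
  have e4 := T.ax2 t f e x' ⟨hx'st, hx'fe⟩
  rw [(T.ax3_idem f e hf he x' hx'fe).2, hfe, htf] at e4
  -- conclude
  calc T.ω t e * x = T.β t x' * T.ω t e := Eq1.symm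
    _ = T.β t x' * T.ω t f * T.ω s e := e4
    _ = T.ω t f * T.β s x' * T.ω s e := by rw [Eq3]
    _ = T.ω t f * (T.β s x' * T.ω s e) := by rw [mul_assoc]
    _ = T.ω t f * (T.ω s e * x) := by rw [Eq2]
end
end
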